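/- For any unbounded increasing function h : ℕ → ℝ⁺, the set of subshifts X such that n ≤ c_X(n) ≤ n + h(n) for infinitely many n is residual in the closure 𝒯'‾ of the infinite transitive subshifts. -/

import Mathlib

open Set Topology Filter

namespace Generic

/-- The shift map `σ` on `ℤ → ℤ`, `(σ x) i = x (i+1)`. -/
def shift : (ℤ → ℤ) → (ℤ → ℤ) := fun x i => x (i + 1)

/-- A subshift: a nonempty compact shift-invariant subset of `𝒜^ℤ`
for some finite alphabet `𝒜 ⊂ ℤ` (product topology, `ℤ` discrete). -/
structure Subshift where
  carrier : Set (ℤ → ℤ)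
  nonempty' : carrier.Nonempty
  finite_alphabet : ∃ A : Finset ℤ, ∀ x ∈ carrier, ∀ i : ℤ, x i ∈ A
  shift_invariant : shift '' carrier = carrier
  isCompact' : IsCompact carrier

/-- The finite word `w` occurs in the biinfinite sequence `x`. -/
def Occurs (w : List ℤ) (x : ℤ → ℤ) : Prop :=
  ∃ k : ℤ, ∀ i : Fin w.length, x (k + (i.1 : ℤ)) = w.get i

namespace Subshift

/-- `L_n(X)`: the set of `n`-letter words appearing in points of `X`. -/
def lang (X : Subshift) (n : ℕ) : Set (List ℤ) :=
  {w | w.length = n ∧ ∃ x ∈ X.carrier, ∀ i : Fin w.length, x (i.1 : ℤ) = w.get i}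

/-- The word complexity function `c_X(n) = |L_n(X)|`. -/
noncomputable def complexity (X : Subshift) (n : ℕ) : ℕ := (X.lang n).ncard

/-- `X` is a shift of finite type: for some finite alphabet `A` and finite set `F` of
forbidden words, `X` is the set of all points of `A^ℤ` containing no word of `F`. -/
def IsSFT (X : Subshift) : Prop :=
  ∃ (A : Finset ℤ) (F : Finset (List ℤ)),
    X.carrier = {x | (∀ i : ℤ, x i ∈ A) ∧ ∀ w ∈ F, ¬ Occurs w x}

end Subshift

/-- The cylinder set `[X, n] = {Y : L_n(Y) = L_n(X)}`. -/
def cylinder (X : Subshift) (n : ℕ) : Set Subshift := {Y | Y.lang n = X.lang n}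

/-- The topology of the space `𝐒` of all subshifts: generated by the cylinder sets `[X,n]`;
this is the topology of the metric `d(X,Y) = 2^{-inf{n : L_n(X) ≠ L_n(Y)}}`. -/
instance : TopologicalSpace Subshift :=
  TopologicalSpace.generateFrom {C | ∃ (X : Subshift) (n : ℕ), C = cylinder X n}

/-- A directed (multi)graph: edge set `E`, vertex set `V`, source and target maps. -/
structure Digraph (V : Type*) (E : Type*) where
  src : E → V
  tgt : E → V

namespace Digraph

variable {V E : Type*}

/-- A cycle of length `k`, encoded as a map `ZMod k → E` with matching endpoints. -/
def IsCycle (G : Digraph V E) {k : ℕ} (c : ZMod k → E) : Prop :=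
  0 < k ∧ ∀ i, G.tgt (c i) = G.src (c (i + 1))

/-- The vertex set of a cycle. -/
def cycleVerts (G : Digraph V E) {k : ℕ} (c : ZMod k → E) : Set V :=
  Set.range fun i => G.src (c i)

/-- The cycle `c` has an incoming edge: an edge whose terminal vertex is on the cycle
and whose initial vertex is not. -/
def HasIncoming (G : Digraph V E) {k : ℕ} (c : ZMod k → E) : Prop :=
  ∃ f : E, G.tgt f ∈ G.cycleVerts c ∧ G.src f ∉ G.cycleVerts c

/-- The cycle `c` has an outgoing edge: an edge whose initial vertex is on the cycle
and whose terminal vertex is not. -/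
def HasOutgoing (G : Digraph V E) {k : ℕ} (c : ZMod k → E) : Prop :=
  ∃ g : E, G.src g ∈ G.cycleVerts c ∧ G.tgt g ∉ G.cycleVerts c

/-- No middle cycles property: no cycle has both an incoming and an outgoing edge. -/
def NMC (G : Digraph V E) : Prop :=
  ¬ ∃ (k : ℕ) (c : ZMod k → E), G.IsCycle c ∧ G.HasIncoming c ∧ G.HasOutgoing c

/-- A simple cycle: a cycle visiting no vertex twice. -/
def IsSimpleCycle (G : Digraph V E) {k : ℕ} (c : ZMod k → E) : Prop :=
  G.IsCycle c ∧ Function.Injective fun i => G.src (c i)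

/-- One middle cycle property: there is a unique simple cycle having both an incoming
and an outgoing edge. -/
def OMC (G : Digraph V E) : Prop :=
  ∃ (k : ℕ) (c : ZMod k → E), G.IsSimpleCycle c ∧ G.HasIncoming c ∧ G.HasOutgoing c ∧
    ∀ (k' : ℕ) (c' : ZMod k' → E), G.IsSimpleCycle c' → G.HasIncoming c' → G.HasOutgoing c' →
      Set.range c' = Set.range c

end Digraph

/-- The `n`-th Rauzy graph of `X`: vertices are the `(n-1)`-letter words of `L(X)`
(embedded in `List ℤ`), edges are the `n`-letter words `w ∈ L_n(X)`, with
`src w` the length-`(n-1)` prefix and `tgt w` the length-`(n-1)` suffix. -/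
def rauzyGraph (X : Subshift) (n : ℕ) : Digraph (List ℤ) (X.lang n) :=
  ⟨fun w => w.1.dropLast, fun w => w.1.tail⟩

/-- `X` has the no middle cycles property. -/
def Subshift.IsNMC (X : Subshift) : Prop := ∃ n : ℕ, 1 ≤ n ∧ (rauzyGraph X n).NMC

/-- `X` has the one middle cycle property. -/
def Subshift.IsOMC (X : Subshift) : Prop := ∃ n : ℕ, 1 ≤ n ∧ (rauzyGraph X n).OMC

/-- The set of NMC subshifts. -/
def NMCset : Set Subshift := {X | X.IsNMC}

/-- The set of OMC subshifts. -/
def OMCset : Set Subshift := {X | X.IsOMC}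

/-- `𝐒'`: the complement of the set of NMC subshifts. -/
def Sprime : Set Subshift := NMCsetᶜ

/-- The shift of a point by `k`: `(σ^k x) i = x (i + k)`. -/
def shiftBy (k : ℤ) (x : ℤ → ℤ) : ℤ → ℤ := fun i => x (i + k)

/-- The orbit `{σ^k x : k ∈ ℤ}` of a point. -/
def orbitOf (x : ℤ → ℤ) : Set (ℤ → ℤ) := {y | ∃ k : ℤ, y = shiftBy k x}

/-- `X` is (topologically) transitive: some point has dense orbit. -/
def Subshift.IsTransitive (X : Subshift) : Prop :=
  ∃ x ∈ X.carrier, X.carrier ⊆ closure (orbitOf x)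

/-- `X` is totally transitive: for every `k ≥ 1` some point has dense `σ^k`-orbit. -/
def Subshift.IsTotallyTransitive (X : Subshift) : Prop :=
  ∀ k : ℕ, 1 ≤ k → ∃ x ∈ X.carrier,
    X.carrier ⊆ closure {y | ∃ m : ℤ, y = shiftBy (m * k) x}

/-- `𝒯'`: the set of infinite transitive subshifts. -/
def Tprime : Set Subshift := {X | X.IsTransitive ∧ X.carrier.Infinite}

/-- `𝒯𝒯'`: the set of infinite totally transitive subshifts. -/
def TTprime : Set Subshift := {X | X.IsTotallyTransitive ∧ X.carrier.Infinite}

/-- `X` is minimal: every word of the language occurs in every point. -/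
def Subshift.IsMinimal (X : Subshift) : Prop :=
  ∀ n : ℕ, ∀ w ∈ X.lang n, ∀ x ∈ X.carrier, Occurs w x

/-- `X` has a periodic point. -/
def Subshift.HasPeriodicPoint (X : Subshift) : Prop :=
  ∃ x ∈ X.carrier, ∃ k : ℕ, 1 ≤ k ∧ ∀ i : ℤ, x (i + k) = x i

/-- `X` is topologically mixing. -/
def Subshift.IsMixing (X : Subshift) : Prop :=
  ∀ (nv nw : ℕ), ∀ v ∈ X.lang nv, ∀ w ∈ X.lang nw, ∃ N : ℕ, ∀ n : ℕ, N < n →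
    ∃ x ∈ X.carrier, (∀ i : Fin v.length, x (i.1 : ℤ) = v.get i) ∧
      ∀ i : Fin w.length, x ((n : ℤ) + (i.1 : ℤ)) = w.get i

lemma Subshift.shift_mem (X : Subshift) {x : ℤ → ℤ} (hx : x ∈ X.carrier) :
    shift x ∈ X.carrier :=
  X.shift_invariant ▸ Set.mem_image_of_mem shift hx

/-- The restriction of the shift map to `X`. -/
def Subshift.restrictShift (X : Subshift) : ↥X.carrier → ↥X.carrier :=
  fun x => ⟨shift x.1, X.shift_mem x.2⟩

/-- Topological conjugacy of subshifts. -/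
def Conjugate (X Y : Subshift) : Prop :=
  ∃ φ : ↥X.carrier ≃ₜ ↥Y.carrier, ∀ x, φ (X.restrictShift x) = Y.restrictShift (φ x)

/-- `lam` is a topological eigenvalue of `(X, σ)`. -/
def Subshift.IsTopEigenvalue (X : Subshift) (lam : ℂ) : Prop :=
  ∃ f : ↥X.carrier → ℂ, Continuous f ∧ (∃ x, f x ≠ 0) ∧
    ∀ x, f (X.restrictShift x) = lam * f x

/-- A regular Toeplitz sequence. -/
def IsRegularToeplitz (x : ℤ → ℤ) : Prop :=
  ∀ ε : ℝ, 0 < ε → ∃ n : ℕ, 0 < n ∧ ∃ S : Finset ℕ, S ⊆ Finset.range n ∧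
    (1 - ε) * (n : ℝ) < (S.card : ℝ) ∧
    ∀ s ∈ S, ∀ i j : ℤ, x ((s : ℤ) + i * (n : ℤ)) = x ((s : ℤ) + j * (n : ℤ))

/-- A regular Toeplitz subshift: the orbit closure of a regular Toeplitz sequence. -/
def Subshift.IsRegularToeplitzSubshift (X : Subshift) : Prop :=
  ∃ x : ℤ → ℤ, IsRegularToeplitz x ∧ X.carrier = closure (orbitOf x)

/-- `X` is the disjoint union of `σ^i E`, `0 ≤ i < n`, for some clopen `E`. -/
def Subshift.HasCyclicPartition (X : Subshift) (n : ℕ) : Prop :=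
  ∃ E : Set ↥X.carrier, IsClopen E ∧
    (⋃ i ∈ Finset.range n, X.restrictShift^[i] '' E) = Set.univ ∧
    ∀ i j : ℕ, i < n → j < n → i ≠ j →
      Disjoint (X.restrictShift^[i] '' E) (X.restrictShift^[j] '' E)

/-- The biinfinite periodic point `p^∞` (with `p` occupying positions `[0, |p|)` and
repeating in both directions). -/
def perPoint (p : List ℤ) : ℤ → ℤ :=
  fun i => p.getD (Int.emod i (p.length : ℤ)).toNat 0

/-- The point `p^∞ m s^∞`: a left-infinite repetition of `p` (ending at position `-1`),
then `m` on `[0, |m|)`, then a right-infinite repetition of `s`. -/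
def barbellPoint (p m s : List ℤ) : ℤ → ℤ := fun i =>
  if i < 0 then perPoint p i
  else if i < (m.length : ℤ) then m.getD i.toNat 0
  else perPoint s (i - (m.length : ℤ))

/-- `𝐒(Y)`: the subshifts contained in `Y`. -/
def SubshiftsOf (Y : Subshift) : Set Subshift := {X | X.carrier ⊆ Y.carrier}

/-- `τ(y)`: the biinfinite concatenation `⋯ t(y₋₁).t(y₀) t(y₁) ⋯` of blocks of length `ℓ`. -/
def tauPoint (t : ℤ → List ℤ) (ℓ : ℕ) (y : ℤ → ℤ) : ℤ → ℤ :=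
  fun j => (t (y (Int.ediv j (ℓ : ℤ)))).getD (Int.emod j (ℓ : ℤ)).toNat 0

/-- `τ*(Y) = {σ^i τ(y) : y ∈ Y, 0 ≤ i < ℓ}`. -/
def tauStar (t : ℤ → List ℤ) (ℓ : ℕ) (Y : Subshift) : Set (ℤ → ℤ) :=
  {z | ∃ y ∈ Y.carrier, ∃ i : ℕ, i < ℓ ∧ z = fun j => tauPoint t ℓ y (j + (i : ℤ))}

/-- `τ(v)` for a finite word `v`: the concatenation of the blocks. -/
def tauWord (t : ℤ → List ℤ) (v : List ℤ) : List ℤ := (v.map t).flatten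

/-- The set of `σ`-orbits of `X`. -/
def Subshift.orbitSet (X : Subshift) : Set (Set (ℤ → ℤ)) :=
  {O | ∃ x ∈ X.carrier, O = orbitOf x}

/-!
A subshift in which some word length has no branching (`c_X(n + 1) ≤ c_X(n)`) is finite, since
each of its points is then determined by one window; so `c_X` is strictly increasing on infinite
subshifts and `c_X(n) ≥ n`. The condition "`n ≤ c_X(n) ≤ n + h(n)` for some `n > N`" only
depends on the languages, hence defines open sets, and it remains to approximate every
`Z ∈ 𝒯'` by infinite transitive subshifts of complexity `m + C`. Take a point `z` with dense
orbit and a length `n`; choose a window of `z` containing all words of `L_{n+1}(Z)` and, on each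
side of it, two occurrences of one word of length `n` at distance at most `c_Z(n)`. Repeating
the block between these occurrences forever on each side gives a point with the same words of
length `n + 1` as `Z` and complexity at most `m + C`. It is not periodic, since a period would
make all its words of length `n + 1` occur in the left block, forcing `c_Z(n + 1) ≤ c_Z(n)`.
-/

open Function

def window (x : ℤ → ℤ) (a : ℤ) (m : ℕ) : List ℤ := List.ofFn fun s : Fin m => x (a + s)

@[simp]
lemma length_window (x : ℤ → ℤ) (a : ℤ) (m : ℕ) : (window x a m).length = m := by
  simp [window]

lemma window_eq_window_iff {x y : ℤ → ℤ} {a b : ℤ} {m : ℕ} :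
    window x a m = window y b m ↔ ∀ s : ℕ, s < m → x (a + s) = y (b + s) := by
  simp only [window, List.ofFn_inj, funext_iff, Fin.forall_iff]

lemma window_eq_of_eqOn {x y : ℤ → ℤ} {S : Set ℤ} (hxy : EqOn x y S) {a : ℤ} {m : ℕ}
    (ha : Ico a (a + m) ⊆ S) : window x a m = window y a m :=
  window_eq_window_iff.2 fun s hs => hxy (ha ⟨by omega, by omega⟩)

lemma take_window (x : ℤ → ℤ) (a : ℤ) {k m : ℕ} (h : k ≤ m) :
    (window x a m).take k = window x a k := by
  apply List.ext_getElem (by simp [h])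
  intro s _ _
  simp [window]

lemma tail_window (x : ℤ → ℤ) (a : ℤ) (m : ℕ) :
    (window x a (m + 1)).tail = window x (a + 1) m := by
  simp only [window, List.ofFn_succ, List.tail_cons, Fin.val_succ]
  congr 1
  funext s
  push_cast
  ring_nf

lemma window_shiftBy (x : ℤ → ℤ) (a b : ℤ) (m : ℕ) :
    window (shiftBy b x) a m = window x (a + b) m :=
  window_eq_window_iff.2 fun s _ => by simp only [shiftBy]; ring_nf

lemma _root_.Function.Periodic.window_eq {p : ℤ → ℤ} {L r r' : ℤ} (hp : Periodic p L)
    (h : r ≡ r' [ZMOD L]) (m : ℕ) : window p r m = window p r' m := by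
  obtain ⟨q, hq⟩ := h.dvd
  refine window_eq_window_iff.2 fun s _ => ?_
  rw [show r' + s = r + s + q * L by linear_combination hq]
  exact (hp.int_mul q (r + s)).symm

namespace Subshift

variable (X : Subshift)

lemma shiftBy_mem {x : ℤ → ℤ} (hx : x ∈ X.carrier) (k : ℤ) :
    shiftBy k x ∈ X.carrier := by
  induction k using Int.induction_on with
  | zero => convert hx using 1; funext i; simp [shiftBy]
  | succ k ih =>
    convert X.shift_mem ih using 1
    funext i
    simp only [shiftBy, shift]
    ring_nf
  | pred k ih =>
    rw [← X.shift_invariant] at ih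
    obtain ⟨y, hy, hxy⟩ := ih
    convert hy using 1
    funext i
    have := congrFun hxy (i - 1)
    simp only [shiftBy, shift, sub_add_cancel] at this
    rw [this, shiftBy]
    ring_nf

lemma mem_lang_iff {w : List ℤ} {m : ℕ} :
    w ∈ X.lang m ↔ ∃ x ∈ X.carrier, window x 0 m = w := by
  constructor
  · rintro ⟨rfl, x, hx, hw⟩
    refine ⟨x, hx, List.ext_getElem (by simp) fun s _ hs => ?_⟩
    simpa [window] using hw ⟨s, hs⟩
  · rintro ⟨x, hx, rfl⟩
    exact ⟨length_window x 0 _, x, hx, fun s => by rw [List.get_eq_getElem]; simp [window]⟩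

lemma window_mem_lang {x : ℤ → ℤ} (hx : x ∈ X.carrier) (a : ℤ) (m : ℕ) :
    window x a m ∈ X.lang m :=
  X.mem_lang_iff.2 ⟨shiftBy a x, X.shiftBy_mem hx a, by rw [window_shiftBy, zero_add]⟩

lemma lang_finite (m : ℕ) : (X.lang m).Finite := by
  obtain ⟨A, hA⟩ := X.finite_alphabet
  refine ((finite_univ (α := Fin m → A)).image fun f => List.ofFn fun s => (f s : ℤ)).subset ?_
  rintro w hw
  obtain ⟨x, hx, rfl⟩ := X.mem_lang_iff.1 hw
  exact ⟨fun s => ⟨_, hA x hx _⟩, Set.mem_univ _, rfl⟩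

lemma lang_eq_image_take {k m : ℕ} (h : k ≤ m) : X.lang k = List.take k '' X.lang m := by
  ext w
  constructor
  · rintro hw
    obtain ⟨x, hx, rfl⟩ := X.mem_lang_iff.1 hw
    exact ⟨_, X.window_mem_lang hx 0 m, take_window x 0 h⟩
  · rintro ⟨_, hv, rfl⟩
    obtain ⟨x, hx, rfl⟩ := X.mem_lang_iff.1 hv
    rw [take_window x 0 h]
    exact X.window_mem_lang hx 0 k

lemma lang_eq_image_tail (m : ℕ) : X.lang m = List.tail '' X.lang (m + 1) := by
  ext w
  constructor
  · rintro hw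
    obtain ⟨x, hx, rfl⟩ := X.mem_lang_iff.1 hw
    refine ⟨_, X.window_mem_lang hx (-1) (m + 1), ?_⟩
    rw [tail_window, neg_add_cancel]
  · rintro ⟨_, hv, rfl⟩
    obtain ⟨x, hx, rfl⟩ := X.mem_lang_iff.1 hv
    rw [tail_window]
    exact X.window_mem_lang hx _ m

/-- If `c_X(n + 1) ≤ c_X(n)`, every word of `L_n(X)` has a unique extension to the right and a
unique extension to the left, so a point of `X` is determined by its window `x[0, n)`. -/
theorem eq_of_window_eq {n : ℕ} (hc : X.complexity (n + 1) ≤ X.complexity n) {x y : ℤ → ℤ}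
    (hx : x ∈ X.carrier) (hy : y ∈ X.carrier) (h : window x 0 n = window y 0 n) : x = y := by
  have injOn_of_image {f : List ℤ → List ℤ} (hf : X.lang n = f '' X.lang (n + 1)) :
      InjOn f (X.lang (n + 1)) :=
    injOn_of_ncard_image_eq (le_antisymm (ncard_image_le (X.lang_finite _))
      (by rw [← hf]; exact hc)) (X.lang_finite _)
  have htake := injOn_of_image (X.lang_eq_image_take n.le_succ)
  have htail := injOn_of_image (X.lang_eq_image_tail n)
  have long_of_left (a : ℤ) (ha : window x a n = window y a n) :
      window x a (n + 1) = window y a (n + 1) :=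
    htake (X.window_mem_lang hx a _) (X.window_mem_lang hy a _)
      (by simpa only [take_window _ _ n.le_succ] using ha)
  have long_of_right (a : ℤ) (ha : window x (a + 1) n = window y (a + 1) n) :
      window x a (n + 1) = window y a (n + 1) :=
    htail (X.window_mem_lang hx a _) (X.window_mem_lang hy a _)
      (by simpa only [tail_window] using ha)
  have hall (a : ℤ) : window x a n = window y a n := by
    induction a using Int.induction_on with
    | zero => exact h
    | succ a ih => simpa only [tail_window] using congrArg List.tail (long_of_left a ih)
    | pred a ih =>
      have := long_of_right (-a - 1) (by rwa [sub_add_cancel])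
      simpa only [take_window _ _ n.le_succ] using congrArg (List.take n) this
  funext a
  simpa using window_eq_window_iff.1 (long_of_left a (hall a)) 0 n.succ_pos

lemma finite_of_complexity_succ_le {n : ℕ} (hc : X.complexity (n + 1) ≤ X.complexity n) :
    X.carrier.Finite :=
  Set.Finite.of_finite_image
    ((X.lang_finite n).subset (image_subset_iff.2 fun _ hx => X.window_mem_lang hx 0 n))
    fun _ hx _ hy h => X.eq_of_window_eq hc hx hy h

theorem complexity_strictMono (hinf : X.carrier.Infinite) : StrictMono X.complexity :=
  strictMono_nat_of_lt_succ fun _ => lt_of_not_ge fun hc => hinf (X.finite_of_complexity_succ_le hc)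

end Subshift

lemma cylinder_subset_cylinder (X : Subshift) {k m : ℕ} (h : k ≤ m) :
    cylinder X m ⊆ cylinder X k := fun Y (hY : Y.lang m = X.lang m) => by
  show Y.lang k = X.lang k
  rw [Y.lang_eq_image_take h, X.lang_eq_image_take h, hY]

lemma isOpen_cylinder (X : Subshift) (n : ℕ) : IsOpen (cylinder X n) :=
  TopologicalSpace.GenerateOpen.basic _ ⟨X, n, rfl⟩

lemma exists_cylinder_subset {U : Set Subshift} (hU : IsOpen U) :
    ∀ X ∈ U, ∃ n, cylinder X n ⊆ U := by
  induction hU with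
  | basic V hV =>
    obtain ⟨X₀, n, rfl⟩ := hV
    exact fun X (hX : X.lang n = X₀.lang n) =>
      ⟨n, fun Y (hY : Y.lang n = X.lang n) => hY.trans hX⟩
  | univ => exact fun _ _ => ⟨0, subset_univ _⟩
  | inter V W _ _ ihV ihW =>
    rintro X ⟨hXV, hXW⟩
    obtain ⟨a, ha⟩ := ihV X hXV
    obtain ⟨b, hb⟩ := ihW X hXW
    exact ⟨max a b, fun Y hY => ⟨ha (cylinder_subset_cylinder X (le_max_left a b) hY),
      hb (cylinder_subset_cylinder X (le_max_right a b) hY)⟩⟩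
  | sUnion S _ ih =>
    rintro X ⟨V, hVS, hXV⟩
    obtain ⟨n, hn⟩ := ih V hVS X hXV
    exact ⟨n, hn.trans (subset_sUnion_of_mem hVS)⟩

lemma isOpen_setOf_lang (n : ℕ) (P : Set (List ℤ) → Prop) :
    IsOpen {X : Subshift | P (X.lang n)} :=
  isOpen_iff_forall_mem_open.2 fun X hX =>
    ⟨cylinder X n, fun _ hY => (congrArg P hY).mpr hX, isOpen_cylinder X n, rfl⟩

lemma isOpen_setOf_window_eq (a : ℤ) (m : ℕ) (w : List ℤ) :
    IsOpen {u : ℤ → ℤ | window u a m = w} := by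
  have hc : Continuous fun (u : ℤ → ℤ) (s : Fin m) => u (a + s) := by fun_prop
  exact hc.isOpen_preimage {v | List.ofFn v = w} (isOpen_discrete _)

lemma exists_window_eq_of_mem_closure_orbitOf {x y : ℤ → ℤ} (hy : y ∈ closure (orbitOf x))
    (m : ℕ) : ∃ a, window x a m = window y 0 m := by
  obtain ⟨_, hu, a, rfl⟩ :=
    mem_closure_iff.1 hy _ (isOpen_setOf_window_eq 0 m (window y 0 m)) rfl
  exact ⟨a, by rw [← hu, window_shiftBy, zero_add]⟩

lemma mem_orbitOf_self (x : ℤ → ℤ) : x ∈ orbitOf x :=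
  ⟨0, by funext i; simp [shiftBy]⟩

lemma shift_shiftBy (k : ℤ) (x : ℤ → ℤ) : shift (shiftBy k x) = shiftBy (k + 1) x := by
  funext i
  simp only [shift, shiftBy]
  ring_nf

def shiftHomeo : (ℤ → ℤ) ≃ₜ (ℤ → ℤ) where
  toFun := shift
  invFun := shiftBy (-1)
  left_inv x := by funext i; simp [shift, shiftBy]
  right_inv x := by funext i; simp [shift, shiftBy]
  continuous_toFun := continuous_pi fun i => continuous_apply (i + 1)
  continuous_invFun := continuous_pi fun i => continuous_apply (i + -1)

lemma image_shift_orbitOf (x : ℤ → ℤ) : shift '' orbitOf x = orbitOf x := by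
  ext y
  constructor
  · rintro ⟨_, ⟨k, rfl⟩, rfl⟩
    exact ⟨k + 1, shift_shiftBy k x⟩
  · rintro ⟨k, rfl⟩
    exact ⟨_, ⟨k - 1, rfl⟩, by rw [shift_shiftBy, sub_add_cancel]⟩

lemma closure_orbitOf_subset_pi (x : ℤ → ℤ) :
    closure (orbitOf x) ⊆ univ.pi fun _ => range x :=
  closure_minimal (fun _ ⟨k, hk⟩ i _ => hk ▸ mem_range_self (i + k))
    (isClosed_set_pi fun _ _ => isClosed_discrete _)

noncomputable def orbitClosure (x : ℤ → ℤ) (hx : (range x).Finite) : Subshift where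
  carrier := closure (orbitOf x)
  nonempty' := ⟨x, subset_closure (mem_orbitOf_self x)⟩
  finite_alphabet :=
    ⟨hx.toFinset, fun _ hy i => hx.mem_toFinset.2 (closure_orbitOf_subset_pi x hy i trivial)⟩
  shift_invariant := by
    rw [show shift = shiftHomeo from rfl, shiftHomeo.image_closure]
    exact congrArg closure (image_shift_orbitOf x)
  isCompact' := (isCompact_univ_pi fun _ => hx.isCompact).of_isClosed_subset isClosed_closure
    (closure_orbitOf_subset_pi x)

lemma orbitClosure_lang (x : ℤ → ℤ) (hx : (range x).Finite) (m : ℕ) :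
    (orbitClosure x hx).lang m = range fun r => window x r m := by
  ext w
  rw [Subshift.mem_lang_iff]
  constructor
  · rintro ⟨y, hy, rfl⟩
    exact exists_window_eq_of_mem_closure_orbitOf hy m
  · rintro ⟨a, rfl⟩
    exact ⟨shiftBy a x, subset_closure ⟨a, rfl⟩, by rw [window_shiftBy, zero_add]⟩

lemma isTransitive_orbitClosure (x : ℤ → ℤ) (hx : (range x).Finite) :
    (orbitClosure x hx).IsTransitive :=
  ⟨x, subset_closure (mem_orbitOf_self x), subset_rfl⟩

lemma infinite_closure_orbitOf {x : ℤ → ℤ} (hx : ∀ T : ℤ, 0 < T → ¬ Periodic x T) :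
    (closure (orbitOf x)).Infinite := by
  refine Set.infinite_of_injective_forall_mem (f := fun k : ℤ => shiftBy k x)
    (Injective.of_lt_imp_ne fun a b hab heq => hx (b - a) (by omega) fun r => ?_)
    fun k => subset_closure ⟨k, rfl⟩
  have := congrFun heq (r - a)
  simp only [shiftBy, sub_add_cancel] at this
  rw [this]
  ring_nf

lemma Subshift.finite_range (X : Subshift) {x : ℤ → ℤ} (hx : x ∈ X.carrier) :
    (range x).Finite :=
  X.finite_alphabet.elim fun A hA => A.finite_toSet.subset (range_subset_iff.2 (hA x hx))

lemma Subshift.exists_window_eq_window (X : Subshift) {z : ℤ → ℤ} (hz : z ∈ X.carrier)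
    (n : ℕ) (a : ℤ) :
    ∃ i j, a ≤ i ∧ i < j ∧ j ≤ a + X.complexity n ∧ window z i n = window z j n := by
  have hcard : (X.lang n).ncard < (Icc a (a + X.complexity n)).ncard := by
    rw [← Finset.coe_Icc, ncard_coe_finset, Int.card_Icc, Subshift.complexity]
    omega
  obtain ⟨r, hr, r', hr', hne, heq⟩ := exists_ne_map_eq_of_ncard_lt_of_maps_to hcard
    (fun r _ => X.window_mem_lang hz r n) (X.lang_finite n)
  rcases hne.lt_or_gt with hlt | hlt
  · exact ⟨r, r', hr.1, hlt, hr'.2, heq⟩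
  · exact ⟨r', r, hr'.1, hlt, hr.2, heq.symm⟩

lemma exists_mem_Icc_eq_of_finite {β : Type*} {f : ℤ → β} {S : Set β} (hS : S.Finite)
    (hf : ∀ w ∈ S, ∃ r, f r = w) : ∃ a b, ∀ w ∈ S, ∃ r ∈ Icc a b, f r = w := by
  choose! g hg using hf
  obtain ⟨a, ha⟩ := (hS.image g).bddBelow
  obtain ⟨b, hb⟩ := (hS.image g).bddAbove
  exact ⟨a, b, fun w hw => ⟨g w, ⟨ha ⟨w, hw, rfl⟩, hb ⟨w, hw, rfl⟩⟩, hg w hw⟩⟩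

lemma modEq_add_emod_sub (a L r : ℤ) : a + (r - a) % L ≡ r [ZMOD L] := by
  simpa using (Int.mod_modEq (r - a) L).add_left a

lemma add_emod_sub_mem_Ico {L : ℤ} (hL : 0 < L) (a r : ℤ) : a + (r - a) % L ∈ Ico a (a + L) :=
  ⟨by have := Int.emod_nonneg (r - a) hL.ne'; omega,
    by have := Int.emod_lt_of_pos (r - a) hL; omega⟩

lemma window_eq_of_eqOn_periodic {x p : ℤ → ℤ} {L : ℤ} {S : Set ℤ} (hp : Periodic p L)
    (hx : EqOn x p S) {r r' : ℤ} (h : r ≡ r' [ZMOD L]) {m : ℕ} (hr : Ico r (r + m) ⊆ S)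
    (hr' : Ico r' (r' + m) ⊆ S) : window x r m = window x r' m :=
  (window_eq_of_eqOn hx hr).trans ((hp.window_eq h m).trans (window_eq_of_eqOn hx hr').symm)

/-- Every window of length `m` already occurs at a position in `[b - m - L₁, a + L₂)`. -/
theorem ncard_range_window_le {x p₁ p₂ : ℤ → ℤ} {L₁ L₂ a b : ℤ} (hp₁ : Periodic p₁ L₁)
    (hp₂ : Periodic p₂ L₂) (hL₁ : 0 < L₁) (hL₂ : 0 < L₂) (hba : b ≤ a)
    (h₁ : EqOn x p₁ (Iio b)) (h₂ : EqOn x p₂ (Ici a)) (m : ℕ) :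
    (range fun r => window x r m).ncard ≤ m + (a + L₂ - b + L₁).toNat := by
  have hsub : (range fun r => window x r m) ⊆
      (fun r => window x r m) '' Ico (b - m - L₁) (a + L₂) := by
    rintro _ ⟨r, rfl⟩
    by_cases hleft : r < b - m
    · obtain ⟨hr₁, hr₂⟩ := add_emod_sub_mem_Ico hL₁ (b - m - L₁) r
      refine ⟨_, ⟨hr₁, by omega⟩, window_eq_of_eqOn_periodic hp₁ h₁
        (modEq_add_emod_sub _ _ r) (fun t ht => ?_) (fun t ht => ?_)⟩ <;>
      · simp only [mem_Ico, mem_Iio] at ht ⊢; omega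
    by_cases hright : a ≤ r
    · obtain ⟨hr₁, hr₂⟩ := add_emod_sub_mem_Ico hL₂ a r
      refine ⟨_, ⟨by omega, hr₂⟩, window_eq_of_eqOn_periodic hp₂ h₂
        (modEq_add_emod_sub _ _ r) (fun t ht => ?_) (fun t ht => ?_)⟩ <;>
      · simp only [mem_Ico, mem_Ici] at ht ⊢; omega
    exact ⟨r, ⟨by omega, by omega⟩, rfl⟩
  calc (range fun r => window x r m).ncard
      ≤ (Ico (b - m - L₁) (a + L₂)).ncard :=
        (ncard_le_ncard hsub ((finite_Ico _ _).image _)).trans (ncard_image_le (finite_Ico _ _))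
    _ ≤ m + (a + L₂ - b + L₁).toNat := by
        rw [← Finset.coe_Ico, ncard_coe_finset, Int.card_Ico]
        omega

lemma range_window_eq_image_Iio {x : ℤ → ℤ} {T : ℤ} (hx : Periodic x T) (hT : 0 < T)
    (b : ℤ) (m : ℕ) : (range fun r => window x r m) = (fun r => window x r m) '' Iio b := by
  refine (range_subset_iff.2 fun r => ?_).antisymm (image_subset_range _ _)
  have := (add_emod_sub_mem_Ico hT (b - T) r).2
  exact ⟨_, show _ < b by omega, hx.window_eq (modEq_add_emod_sub (b - T) T r) m⟩

def periodicExtension (z : ℤ → ℤ) (a L : ℤ) : ℤ → ℤ := fun r => z (a + (r - a) % L)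

lemma periodic_periodicExtension (z : ℤ → ℤ) (a L : ℤ) :
    Periodic (periodicExtension z a L) L := fun r => by
  simp only [periodicExtension, show r + L - a = r - a + L by ring, Int.add_emod_right]

lemma eqOn_periodicExtension {z : ℤ → ℤ} {a L : ℤ} (hL : 0 < L) {n : ℕ}
    (hz : window z a n = window z (a + L) n) :
    EqOn (periodicExtension z a L) z (Ico a (a + L + n)) := by
  have key (k : ℕ) :
      ∀ r, a ≤ r → r < a + k → r < a + L + n → periodicExtension z a L r = z r := by
    induction k with
    | zero => intro r _ _ _; omega
    | succ k ih =>
      intro r har hrk hrn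
      by_cases hr : r < a + L
      · simp only [periodicExtension, add_sub_cancel,
          Int.emod_eq_of_lt (by omega : 0 ≤ r - a) (by omega : r - a < L)]
      have hzr : z (r - L) = z r := by
        have := window_eq_window_iff.1 hz (r - L - a).toNat (by omega)
        rwa [Int.toNat_of_nonneg (by omega), show a + (r - L - a) = r - L by ring,
          show a + L + (r - L - a) = r by ring] at this
      rw [← hzr, ← ih (r - L) (by omega) (by omega) (by omega),
        (periodic_periodicExtension z a L).sub_eq]
  exact fun r ⟨har, hrn⟩ => key (r - a).toNat.succ r har (by omega) hrn

lemma window_periodicExtension {z : ℤ → ℤ} {a L : ℤ} (hL : 0 < L) {n : ℕ}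
    (hz : window z a n = window z (a + L) n) (r : ℤ) :
    window (periodicExtension z a L) r (n + 1) = window z (a + (r - a) % L) (n + 1) := by
  obtain ⟨h₁, h₂⟩ := add_emod_sub_mem_Ico hL a r
  refine ((periodic_periodicExtension z a L).window_eq (modEq_add_emod_sub a L r).symm _).trans
    (window_eq_of_eqOn (eqOn_periodicExtension hL hz) fun t ⟨ht₁, ht₂⟩ =>
      ⟨by omega, ?_⟩)
  push_cast at ht₂
  omega

/-- The point `⋯ p p p z[i, l) s s s ⋯` with `p = z[i, j)` and `s = z[k, l)`, placed so that it
agrees with `z` on `[i, l)`. -/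
def splice (z : ℤ → ℤ) (i j k l : ℤ) : ℤ → ℤ := fun r =>
  if r < i then periodicExtension z i (j - i) r
  else if r < l then z r else periodicExtension z k (l - k) r

section splice

variable {z : ℤ → ℤ} {i j k l : ℤ} {n : ℕ}

lemma range_splice_subset : range (splice z i j k l) ⊆ range z := by
  rintro _ ⟨r, rfl⟩
  simp only [splice, periodicExtension]
  split_ifs <;> exact mem_range_self _

lemma splice_eqOn_left : EqOn (splice z i j k l) (periodicExtension z i (j - i)) (Iio i) :=
  fun _ hr => if_pos hr

lemma splice_eqOn_right (hil : i ≤ l) :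
    EqOn (splice z i j k l) (periodicExtension z k (l - k)) (Ici l) := fun r (hr : l ≤ r) => by
  simp only [splice, if_neg (show ¬r < i by omega), if_neg (show ¬r < l by omega)]

lemma splice_eqOn_mid (hkl : k < l) (hz : window z k n = window z l n) :
    EqOn (splice z i j k l) z (Ico i (l + n)) := fun r ⟨hir, hrl⟩ => by
  simp only [splice, if_neg (show ¬r < i by omega)]
  split_ifs with hr
  · rfl
  · exact eqOn_periodicExtension (by omega) (by rwa [add_sub_cancel]) ⟨by omega, by omega⟩

lemma splice_eqOn_left_extended (hij : i < j) (hjl : j ≤ l) (hkl : k < l)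
    (hz₁ : window z i n = window z j n) (hz₂ : window z k n = window z l n) :
    EqOn (splice z i j k l) (periodicExtension z i (j - i)) (Iio (j + n)) := fun r hr => by
  by_cases hri : r < i
  · exact splice_eqOn_left hri
  rw [splice_eqOn_mid hkl hz₂ ⟨by omega, by simp only [mem_Iio] at hr; omega⟩]
  exact (eqOn_periodicExtension (by omega) (by rwa [add_sub_cancel])
    ⟨by omega, by simp only [mem_Iio] at hr; omega⟩).symm

lemma window_splice_of_mem_Ico (hkl : k < l) (hz₂ : window z k n = window z l n) {r : ℤ}
    (hir : i ≤ r) (hrl : r < l) : window (splice z i j k l) r (n + 1) = window z r (n + 1) :=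
  window_eq_of_eqOn (splice_eqOn_mid hkl hz₂) fun t ⟨ht₁, ht₂⟩ => ⟨by omega, by
    push_cast at ht₂; omega⟩

lemma window_splice_of_lt (hij : i < j) (hjl : j ≤ l) (hkl : k < l)
    (hz₁ : window z i n = window z j n) (hz₂ : window z k n = window z l n) {r : ℤ}
    (hr : r < j) :
    window (splice z i j k l) r (n + 1) = window z (i + (r - i) % (j - i)) (n + 1) :=
  (window_eq_of_eqOn (splice_eqOn_left_extended hij hjl hkl hz₁ hz₂) fun t ⟨_, ht⟩ => by
    push_cast at ht; simp only [mem_Iio]; omega).trans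
    (window_periodicExtension (by omega) (by rwa [add_sub_cancel]) r)

lemma exists_window_splice_eq (hij : i < j) (hjl : j ≤ l) (hkl : k < l)
    (hz₁ : window z i n = window z j n) (hz₂ : window z k n = window z l n) (r : ℤ) :
    ∃ r', window z r' (n + 1) = window (splice z i j k l) r (n + 1) := by
  by_cases hrj : r < j
  · exact ⟨_, (window_splice_of_lt hij hjl hkl hz₁ hz₂ hrj).symm⟩
  by_cases hrl : r < l
  · exact ⟨r, (window_splice_of_mem_Ico hkl hz₂ (by omega) hrl).symm⟩
  refine ⟨_, ((window_eq_of_eqOn (splice_eqOn_right (by omega)) fun t ⟨ht, _⟩ => ?_).trans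
    (window_periodicExtension (by omega) (by rwa [add_sub_cancel]) r)).symm⟩
  simp only [mem_Ici]
  omega

lemma ncard_range_window_splice_le_of_periodic (hij : i < j) (hjl : j ≤ l) (hkl : k < l)
    (hz₁ : window z i n = window z j n) (hz₂ : window z k n = window z l n) {T : ℤ}
    (hT : Periodic (splice z i j k l) T) (hTpos : 0 < T) :
    (range fun r => window (splice z i j k l) r (n + 1)).ncard ≤ (j - i).toNat := by
  have hsub : (fun r => window (splice z i j k l) r (n + 1)) '' Iio j ⊆
      (fun r => window z r (n + 1)) '' Ico i j := by
    rintro _ ⟨r, hr, rfl⟩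
    obtain ⟨h₁, h₂⟩ := add_emod_sub_mem_Ico (sub_pos.2 hij) i r
    exact ⟨_, ⟨h₁, by omega⟩, (window_splice_of_lt hij hjl hkl hz₁ hz₂ hr).symm⟩
  rw [range_window_eq_image_Iio hT hTpos j]
  calc _ ≤ ((fun r => window z r (n + 1)) '' Ico i j).ncard :=
        ncard_le_ncard hsub ((finite_Ico _ _).image _)
    _ ≤ (Ico i j).ncard := ncard_image_le (finite_Ico _ _)
    _ = (j - i).toNat := by rw [← Finset.coe_Ico, ncard_coe_finset, Int.card_Ico]

end splice

theorem exists_mem_Tprime_mem_cylinder_complexity_le {Z : Subshift} (hZ : Z ∈ Tprime)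
    (n : ℕ) :
    ∃ Y ∈ Tprime, Y ∈ cylinder Z (n + 1) ∧ ∃ C : ℕ, ∀ m, Y.complexity m ≤ m + C := by
  obtain ⟨⟨z, hz, hzd⟩, hinf⟩ := hZ
  obtain ⟨a, b, hab⟩ := exists_mem_Icc_eq_of_finite (Z.lang_finite (n + 1)) fun w hw => by
    obtain ⟨y, hy, rfl⟩ := Z.mem_lang_iff.1 hw
    exact exists_window_eq_of_mem_closure_orbitOf (hzd hy) (n + 1)
  obtain ⟨i, j, hi, hij, hj, hz₁⟩ := Z.exists_window_eq_window hz n (a - Z.complexity n)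
  obtain ⟨k, l, hk, hkl, -, hz₂⟩ := Z.exists_window_eq_window hz n (max a b)
  have hjl : j ≤ l := by omega
  set x := splice z i j k l
  have hx : (range x).Finite := (Z.finite_range hz).subset range_splice_subset
  have hlang : (orbitClosure x hx).lang (n + 1) = Z.lang (n + 1) := by
    rw [orbitClosure_lang]
    refine (range_subset_iff.2 fun r => ?_).antisymm fun w hw => ?_
    · obtain ⟨r', hr'⟩ := exists_window_splice_eq hij hjl hkl hz₁ hz₂ r
      exact hr' ▸ Z.window_mem_lang hz r' (n + 1)
    · obtain ⟨r, ⟨har, hrb⟩, rfl⟩ := hab w hw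
      exact ⟨r, window_splice_of_mem_Ico hkl hz₂ (by omega) (by omega)⟩
  have haper (T : ℤ) (hT : 0 < T) : ¬ Periodic x T := fun hper => by
    have hlt := Z.complexity_strictMono hinf n.lt_add_one
    have hle := ncard_range_window_splice_le_of_periodic hij hjl hkl hz₁ hz₂ hper hT
    rw [← orbitClosure_lang x hx, hlang] at hle
    unfold Subshift.complexity at hlt hi hj
    omega
  refine ⟨orbitClosure x hx, ⟨isTransitive_orbitClosure x hx, infinite_closure_orbitOf haper⟩,
    hlang, (l + (l - k) - i + (j - i)).toNat, fun m => ?_⟩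
  rw [Subshift.complexity, orbitClosure_lang]
  exact ncard_range_window_le (periodic_periodicExtension z i (j - i))
    (periodic_periodicExtension z k (l - k)) (by omega) (by omega) (by omega) splice_eqOn_left
    (splice_eqOn_right (by omega)) m

lemma Tprime_subset_closure_complexity_le :
    Tprime ⊆ closure {Y ∈ Tprime | ∃ C : ℕ, ∀ m, Y.complexity m ≤ m + C} := fun Z hZ =>
  mem_closure_iff.2 fun U hU hZU => by
    obtain ⟨n, hn⟩ := exists_cylinder_subset hU Z hZU
    obtain ⟨Y, hY, hYZ, hC⟩ := exists_mem_Tprime_mem_cylinder_complexity_le hZ n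
    exact ⟨Y, hn (cylinder_subset_cylinder Z n.le_succ hYZ), hY, hC⟩

def complexityNearAfter (h : ℕ → ℝ) (N : ℕ) : Set Subshift :=
  {X | ∃ n, N < n ∧ (n : ℝ) ≤ X.complexity n ∧ (X.complexity n : ℝ) ≤ n + h n}

lemma isOpen_complexityNearAfter (h : ℕ → ℝ) (N : ℕ) :
    IsOpen (complexityNearAfter h N) := by
  simp only [complexityNearAfter, ofPred_exists]
  exact isOpen_iUnion fun n => isOpen_setOf_lang n
    fun L => N < n ∧ (n : ℝ) ≤ L.ncard ∧ (L.ncard : ℝ) ≤ n + h n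

lemma mem_complexityNearAfter {h : ℕ → ℝ} (hh : Tendsto h atTop atTop) {X : Subshift}
    (hinf : X.carrier.Infinite) {C : ℕ} (hC : ∀ m, X.complexity m ≤ m + C) (N : ℕ) :
    X ∈ complexityNearAfter h N := by
  obtain ⟨n₀, hn₀⟩ := eventually_atTop.1 (hh.eventually_ge_atTop (C : ℝ))
  set n := max n₀ N + 1
  refine ⟨n, by omega, by exact_mod_cast (X.complexity_strictMono hinf).id_le n, ?_⟩
  calc (X.complexity n : ℝ) ≤ n + C := by exact_mod_cast hC n
    _ ≤ n + h n := by gcongr; exact hn₀ n (by omega)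

theorem low_complexity_residual_in_closure_tprime_general (h : ℕ → ℝ)
    (hunb : Tendsto h atTop atTop) :
    ∃ G : Set ↥(closure Tprime),
      G ⊆ {X : ↥(closure Tprime) | ∀ N : ℕ, ∃ n : ℕ, N < n ∧
        (n : ℝ) ≤ (X.1.complexity n : ℝ) ∧ (X.1.complexity n : ℝ) ≤ (n : ℝ) + h n} ∧
      IsGδ G ∧ Dense G := by
  have hG : {X : ↥(closure Tprime) | ∀ N : ℕ, ∃ n : ℕ, N < n ∧
      (n : ℝ) ≤ (X.1.complexity n : ℝ) ∧ (X.1.complexity n : ℝ) ≤ (n : ℝ) + h n} =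
      ⋂ N, Subtype.val ⁻¹' complexityNearAfter h N := by
    ext
    simp [complexityNearAfter]
  refine ⟨_, subset_rfl, ?_, ?_⟩
  · rw [hG]
    exact .iInter_of_isOpen fun N =>
      (isOpen_complexityNearAfter h N).preimage continuous_subtype_val
  · rw [Subtype.dense_iff]
    refine closure_minimal (Tprime_subset_closure_complexity_le.trans (closure_mono ?_))
      isClosed_closure
    rintro Y ⟨hY, C, hC⟩
    exact ⟨⟨Y, subset_closure hY⟩, fun N => mem_complexityNearAfter hunb hY.2 hC N, rfl⟩

/-- For any unbounded increasing `h : ℕ → ℝ⁺`, the set of subshifts `X` with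
`n ≤ c_X(n) ≤ n + h(n)` for infinitely many `n` is residual in `𝒯'‾`. -/
theorem low_complexity_residual_in_closure_tprime (h : ℕ → ℝ)
    (hpos : ∀ n, 0 < h n) (hmono : Monotone h) (hunb : Tendsto h atTop atTop) :
    ∃ G : Set ↥(closure Tprime),
      G ⊆ {X : ↥(closure Tprime) | ∀ N : ℕ, ∃ n : ℕ, N < n ∧
        (n : ℝ) ≤ (X.1.complexity n : ℝ) ∧ (X.1.complexity n : ℝ) ≤ (n : ℝ) + h n} ∧
      IsGδ G ∧ Dense G :=
  low_complexity_residual_in_closure_tprime_general h hunb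

end Generic
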